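/- For any outcome y ∈ {good, bad}, recommendation r and action a in {safe, risky}, the Prospect-Theory loss ℓ^PT(y,r,a) = λ·[ℓ(y,a)-ℓ(y,r)]₊ − [ℓ(y,a)-ℓ(y,r)]₋ satisfies ℓ^PT(y,r,a) = ℓ(y,a) − ℓ(y,r) + Δ(y,a,r), where Δ(y,a,r) = (λ−1)·c_I if (y=good, a=safe, r=risky), (λ−1)·c_II if (y=bad, a=risky, r=safe), and 0 otherwise. Consequently, since ℓ(y,r) does not depend on a, minimizing E[ℓ^PT(Y,R,A)] over actions A is equivalent to minimizing E[ℓ*(Y,A,R)] with Δ_I = (λ−1)c_I, Δ_II = (λ−1)c_II. -/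
import Mathlib


/-- Loss: `y = true` is the bad outcome, `a = true` is the risky action. -/
noncomputable def lossFn (cI cII : ℝ) (y a : Bool) : ℝ :=
  (if y = false ∧ a = false then cI else 0) + (if y = true ∧ a = true then cII else 0)

/-- Prospect-Theory loss relative to the reference loss of following the
recommendation r, with loss-aversion factor λ. -/
noncomputable def lossPT (cI cII lam : ℝ) (y r a : Bool) : ℝ :=
  lam * max (lossFn cI cII y a - lossFn cI cII y r) 0
    - max (-(lossFn cI cII y a - lossFn cI cII y r)) 0

/-- Recommendation-dependent decision loss ℓ* with penalties Δ_I, Δ_II. -/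
noncomputable def lossStar (cI cII ΔI ΔII : ℝ) (y a r : Bool) : ℝ :=
  lossFn cI cII y a
    + (if y = false ∧ a = false ∧ r = true then ΔI else 0)
    + (if y = true ∧ a = true ∧ r = false then ΔII else 0)

/-- ℓ^PT(y,r,a) = ℓ(y,a) − ℓ(y,r) + Δ(y,a,r) with
Δ = (λ−1)cI on (good, safe, risky) and (λ−1)cII on (bad, risky, safe);
consequently choices minimizing ℓ^PT coincide with choices minimizing ℓ* with
Δ_I = (λ−1)cI, Δ_II = (λ−1)cII. -/
theorem prospect_theory_equivalence
    (cI cII lam : ℝ) (hcI : 0 < cI) (hcII : 0 < cII) (hlam : 1 < lam) :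
    (∀ y r a : Bool, lossPT cI cII lam y r a =
      lossFn cI cII y a - lossFn cI cII y r
        + (if y = false ∧ a = false ∧ r = true then (lam - 1) * cI else 0)
        + (if y = true ∧ a = true ∧ r = false then (lam - 1) * cII else 0)) ∧
    (∀ y r a a' : Bool,
      lossPT cI cII lam y r a ≤ lossPT cI cII lam y r a' ↔
      lossStar cI cII ((lam - 1) * cI) ((lam - 1) * cII) y a r ≤
        lossStar cI cII ((lam - 1) * cI) ((lam - 1) * cII) y a' r) := by
  have key : ∀ y r a : Bool, lossPT cI cII lam y r a =
      lossFn cI cII y a - lossFn cI cII y r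
        + (if y = false ∧ a = false ∧ r = true then (lam - 1) * cI else 0)
        + (if y = true ∧ a = true ∧ r = false then (lam - 1) * cII else 0) := by
    intro y r a
    rcases y with _|_ <;> rcases r with _|_ <;> rcases a with _|_ <;>
      simp [lossPT, lossFn] <;>
      first
        | (rw [max_eq_left (by linarith), max_eq_right (by linarith)]; ring)
        | (rw [max_eq_right (by linarith), max_eq_left (by linarith)]; ring)
  refine ⟨key, fun y r a a' => ?_⟩
  rw [key, key]
  unfold lossStar
  constructor <;> intro h <;> linarith
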